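/- arXiv:2211.08236 — 3 statements merged into one kernel-verified Lean document; each statement's English description precedes it below -/
import Mathlib

section
/- For θ ∈ (0, π), the function G(θ) = (1/(4π²)) (θ − π) cot θ satisfies the radial inhomogeneous Laplace equation on the 3-sphere: (1/sin²θ) · d/dθ (sin²θ · dG/dθ) = −1/(2π²). -/
open Real Set

lemma sin_ne (x : ℝ) (hx : x ∈ Set.Ioo 0 Real.pi) : Real.sin x ≠ 0 :=
  ne_of_gt (Real.sin_pos_of_pos_of_lt_pi hx.1 hx.2)

lemma deriv_G (x : ℝ) (hx : x ∈ Set.Ioo 0 Real.pi) :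
    deriv (fun y => (y - Real.pi) * Real.cos y / (4 * Real.pi ^ 2 * Real.sin y)) x
      = ((1 * Real.cos x + (x - Real.pi) * (-Real.sin x)) * (4 * Real.pi ^ 2 * Real.sin x)
          - (x - Real.pi) * Real.cos x * (4 * Real.pi ^ 2 * Real.cos x))
        / (4 * Real.pi ^ 2 * Real.sin x) ^ 2 := by
  have hs := sin_ne x hx
  have hnum : HasDerivAt (fun y => (y - Real.pi) * Real.cos y)
      (1 * Real.cos x + (x - Real.pi) * (-Real.sin x)) x :=
    ((hasDerivAt_id x).sub_const Real.pi).mul (Real.hasDerivAt_cos x)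
  have hden : HasDerivAt (fun y => 4 * Real.pi ^ 2 * Real.sin y)
      (4 * Real.pi ^ 2 * Real.cos x) x := (Real.hasDerivAt_sin x).const_mul _
  have hden_ne : 4 * Real.pi ^ 2 * Real.sin x ≠ 0 := by
    positivity
  exact (hnum.div hden hden_ne).deriv

lemma inner_eq (x : ℝ) (hx : x ∈ Set.Ioo 0 Real.pi) :
    Real.sin x ^ 2 *
      deriv (fun y => (y - Real.pi) * Real.cos y / (4 * Real.pi ^ 2 * Real.sin y)) x
      = (Real.sin x * Real.cos x - (x - Real.pi)) / (4 * Real.pi ^ 2) := by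
  have hs := sin_ne x hx
  rw [deriv_G x hx]
  have hpi := Real.pi_ne_zero
  field_simp
  linear_combination (Real.pi - x) *
    (Real.sin_sq_add_cos_sq x)

theorem three_sphere_radial_laplace (θ : ℝ) (hθ : θ ∈ Set.Ioo 0 Real.pi) :
    (1 / (Real.sin θ) ^ 2) *
      deriv (fun x => (Real.sin x) ^ 2 *
        deriv (fun y => (y - Real.pi) * Real.cos y / (4 * Real.pi ^ 2 * Real.sin y)) x) θ
      = -(1 / (2 * Real.pi ^ 2)) := by
  have hs := sin_ne θ hθ
  have heq : (fun x => (Real.sin x) ^ 2 *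
      deriv (fun y => (y - Real.pi) * Real.cos y / (4 * Real.pi ^ 2 * Real.sin y)) x)
      =ᶠ[nhds θ] (fun x => (Real.sin x * Real.cos x - (x - Real.pi)) / (4 * Real.pi ^ 2)) := by
    filter_upwards [isOpen_Ioo.mem_nhds hθ] with x hx using inner_eq x hx
  rw [heq.deriv_eq]
  have h1 : HasDerivAt (fun x => (Real.sin x * Real.cos x - (x - Real.pi)) / (4 * Real.pi ^ 2))
      ((Real.cos θ * Real.cos θ + Real.sin θ * (-Real.sin θ) - 1) / (4 * Real.pi ^ 2)) θ := by
    exact (((Real.hasDerivAt_sin θ).mul (Real.hasDerivAt_cos θ)).sub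
      ((hasDerivAt_id θ).sub_const Real.pi)).div_const _
  rw [h1.deriv]
  have hc : Real.cos θ * Real.cos θ = 1 - Real.sin θ * Real.sin θ := by
    have := Real.sin_sq_add_cos_sq θ; nlinarith
  rw [hc]
  have hpi := Real.pi_ne_zero
  field_simp
  ring
end

section
/- For N ≥ 2, the force function F(θ) = (1/(4π^{N/2})) (Γ(N/2) − (2/√π) Γ((N+1)/2) K(θ)) / (sin θ)^{N−1}, where K(θ) = ∫_{π/2}^θ (sin φ)^{N−1} dφ, equals the derivative of G(θ) = (1/(2 A_{N−1})) I(θ) − (1/A_N) J(θ), with I, J as the single and double integrals above and A_N = 2π^{(N+1)/2}/Γ((N+1)/2). -/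
open Real Set

/-- Surface area of the unit n-sphere. -/
noncomputable def sphereArea (n : ℕ) : ℝ :=
  2 * Real.pi ^ (((n : ℝ) + 1) / 2) / Real.Gamma (((n : ℝ) + 1) / 2)

lemma prim_hasDerivAt {f : ℝ → ℝ} (hf : ContinuousOn f (Set.Ioo 0 Real.pi)) {x : ℝ}
    (hx : x ∈ Set.Ioo 0 Real.pi) :
    HasDerivAt (fun u => ∫ t in (Real.pi/2)..u, f t) (f x) x := by
  have hhalf : Real.pi/2 ∈ Set.Ioo 0 Real.pi := by
    constructor <;> nlinarith [Real.pi_pos]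
  have hsub : Set.uIcc (Real.pi/2) x ⊆ Set.Ioo 0 Real.pi :=
    (Set.ordConnected_Ioo).uIcc_subset hhalf hx
  exact intervalIntegral.integral_hasDerivAt_right
    ((hf.mono hsub).intervalIntegrable)
    (hf.stronglyMeasurableAtFilter isOpen_Ioo x hx)
    (hf.continuousAt (isOpen_Ioo.mem_nhds hx))

theorem force_eq_deriv_green (N : ℕ) (hN : 2 ≤ N) (θ : ℝ) (hθ : θ ∈ Set.Ioo 0 Real.pi)
    (I J K : ℝ → ℝ)
    (hI : ∀ x, I x = ∫ φ in (Real.pi / 2)..x, (Real.sin φ) ^ ((1 : ℝ) - N))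
    (hJ : ∀ x, J x = ∫ ϑ in (Real.pi / 2)..x,
        (Real.sin ϑ) ^ ((1 : ℝ) - N) * ∫ φ in (Real.pi / 2)..ϑ, (Real.sin φ) ^ ((N : ℝ) - 1))
    (hK : ∀ x, K x = ∫ φ in (Real.pi / 2)..x, (Real.sin φ) ^ ((N : ℝ) - 1)) :
    (1 / (4 * Real.pi ^ ((N : ℝ) / 2))) *
        (Real.Gamma ((N : ℝ) / 2) -
          (2 / Real.sqrt Real.pi) * Real.Gamma (((N : ℝ) + 1) / 2) * K θ) /
        (Real.sin θ) ^ ((N : ℝ) - 1)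
      = deriv (fun x => (1 / (2 * sphereArea (N - 1))) * I x - (1 / sphereArea N) * J x) θ := by
  have hsinpos : ∀ x ∈ Set.Ioo 0 Real.pi, 0 < Real.sin x := fun x hx =>
    Real.sin_pos_of_pos_of_lt_pi hx.1 hx.2
  -- continuity of integrands on Ioo 0 π
  have hc1 : ContinuousOn (fun x => Real.sin x ^ ((1 : ℝ) - N)) (Set.Ioo 0 Real.pi) :=
    Real.continuous_sin.continuousOn.rpow_const fun x hx => Or.inl (hsinpos x hx).ne'
  have hc2 : ContinuousOn (fun x => Real.sin x ^ ((N : ℝ) - 1)) (Set.Ioo 0 Real.pi) :=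
    Real.continuous_sin.continuousOn.rpow_const fun x hx => Or.inl (hsinpos x hx).ne'
  have hcK : ContinuousOn (fun u => ∫ t in (Real.pi/2)..u, Real.sin t ^ ((N : ℝ) - 1))
      (Set.Ioo 0 Real.pi) := fun x hx =>
    ((prim_hasDerivAt hc2 hx).continuousAt).continuousWithinAt
  have hcJ : ContinuousOn
      (fun ϑ => Real.sin ϑ ^ ((1 : ℝ) - N) * ∫ φ in (Real.pi/2)..ϑ, Real.sin φ ^ ((N : ℝ) - 1))
      (Set.Ioo 0 Real.pi) := hc1.mul hcK
  -- derivatives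
  have hIfun : I = fun u => ∫ t in (Real.pi/2)..u, Real.sin t ^ ((1 : ℝ) - N) := funext hI
  have hJfun : J = fun u => ∫ t in (Real.pi/2)..u,
      Real.sin t ^ ((1 : ℝ) - N) * ∫ φ in (Real.pi/2)..t, Real.sin φ ^ ((N : ℝ) - 1) := funext hJ
  have hI' : HasDerivAt I (Real.sin θ ^ ((1 : ℝ) - N)) θ := by
    rw [hIfun]; exact prim_hasDerivAt hc1 hθ
  have hJ' : HasDerivAt J (Real.sin θ ^ ((1 : ℝ) - N) * K θ) θ := by
    rw [hJfun, hK]; exact prim_hasDerivAt hcJ hθ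
  have hG : HasDerivAt (fun x => (1 / (2 * sphereArea (N - 1))) * I x - (1 / sphereArea N) * J x)
      ((1 / (2 * sphereArea (N - 1))) * (Real.sin θ ^ ((1 : ℝ) - N))
        - (1 / sphereArea N) * (Real.sin θ ^ ((1 : ℝ) - N) * K θ)) θ :=
    ((hI'.const_mul _).sub (hJ'.const_mul _))
  rw [hG.deriv]
  -- arithmetic
  have hs : 0 < Real.sin θ := hsinpos θ hθ
  have hNcast : ((N - 1 : ℕ) : ℝ) = (N : ℝ) - 1 := by
    rw [Nat.cast_sub (by omega)]; norm_num
  have hA : sphereArea (N - 1) = 2 * Real.pi ^ ((N : ℝ) / 2) / Real.Gamma ((N : ℝ) / 2) := by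
    unfold sphereArea
    rw [hNcast]
    ring_nf
  have hB : sphereArea N
      = 2 * (Real.pi ^ ((N : ℝ) / 2) * Real.sqrt Real.pi) / Real.Gamma (((N : ℝ) + 1) / 2) := by
    unfold sphereArea
    rw [Real.sqrt_eq_rpow, ← Real.rpow_add Real.pi_pos]
    ring_nf
  have hexp : (1 : ℝ) - N = -((N : ℝ) - 1) := by ring
  rw [hA, hB, hexp, Real.rpow_neg hs.le]
  have h1 : Real.Gamma ((N : ℝ) / 2) ≠ 0 :=
    (Real.Gamma_pos_of_pos (by positivity)).ne'
  have h2 : Real.Gamma (((N : ℝ) + 1) / 2) ≠ 0 :=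
    (Real.Gamma_pos_of_pos (by positivity)).ne'
  have h3 : Real.pi ^ ((N : ℝ) / 2) ≠ 0 := by positivity
  have h4 : Real.sqrt Real.pi ≠ 0 := by positivity
  have h5 : Real.sin θ ^ ((N : ℝ) - 1) ≠ 0 := by positivity
  field_simp
  ring
end

section
/- For a uniform ring of unit total mass at polar angle ϑ on the unit 2-sphere, the azimuthally averaged tangential force on a test particle at (θ, 0) with θ ≠ ϑ, given by f(θ,ϑ) = −∫₀^{2π} (∂/∂θ) ln(1 − cos Θ(θ,ϑ,φ)) dφ where cos Θ = cos θ cos ϑ + sin θ sin ϑ cos φ, equals 2π sin θ/(1+cos θ) when θ < ϑ and −2π sin θ/(1−cos θ) when θ > ϑ. -/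
open Real

lemma poisson_hasDerivAt (C D r : ℝ) (hD : 0 < D) (hDC : D < C)
    (hr : 0 < r) (hr2 : r^2 = C^2 - D^2) (φ : ℝ) :
    HasDerivAt (fun x => x + 2 * Real.arctan (D * Real.sin x / (C + r - D * Real.cos x)))
      (r / (C - D * Real.cos φ)) φ := by
  have hc1 := Real.cos_le_one φ
  have hc2 := Real.neg_one_le_cos φ
  have hs := Real.sin_sq_add_cos_sq φ
  have hM : 0 < C - D * Real.cos φ := by nlinarith
  have hS : 0 < C + r - D * Real.cos φ := by nlinarith
  have hnum : HasDerivAt (fun x => D * Real.sin x) (D * Real.cos φ) φ :=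
    (Real.hasDerivAt_sin φ).const_mul D
  have hden : HasDerivAt (fun x => C + r - D * Real.cos x) (D * Real.sin φ) φ := by
    have h := ((Real.hasDerivAt_cos φ).const_mul D).const_sub (C + r)
    exact h.congr_deriv (by ring)
  have hu := hnum.div hden hS.ne'
  have harc := (Real.hasDerivAt_arctan (D * Real.sin φ / (C + r - D * Real.cos φ))).comp φ hu
  have htot := (hasDerivAt_id φ).add (harc.const_mul 2)
  refine htot.congr_deriv (Eq.symm ?_)
  have h1 : (C + r - D * Real.cos φ) ≠ 0 := hS.ne'
  have h2 : (C - D * Real.cos φ) ≠ 0 := hM.ne'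
  have hkey2 : D * Real.cos φ * (C + r - D * Real.cos φ) - D * Real.sin φ * (D * Real.sin φ)
      = D * (C + r) * Real.cos φ - D ^ 2 := by linear_combination (-(D^2)) * hs
  have h3 : 1 + (D * Real.sin φ / (C + r - D * Real.cos φ)) ^ 2
      = 2 * (C + r) * (C - D * Real.cos φ) / (C + r - D * Real.cos φ) ^ 2 := by
    field_simp
    linear_combination hr2 + D ^ 2 * hs
  have hCr : (0:ℝ) < C + r := by linarith
  have h4 : 1 / (2 * (C + r) * (C - D * Real.cos φ) / (C + r - D * Real.cos φ) ^ 2) *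
      ((D * (C + r) * Real.cos φ - D ^ 2) / (C + r - D * Real.cos φ) ^ 2)
      = (D * (C + r) * Real.cos φ - D ^ 2) / (2 * (C + r) * (C - D * Real.cos φ)) := by
    rw [one_div_div]
    field_simp
  rw [h3, hkey2, h4]
  rw [div_eq_iff h2]
  field_simp
  linear_combination hr2

lemma full_hasDerivAt (A B C D r : ℝ) (hD : 0 < D) (hDC : D < C)
    (hr : 0 < r) (hr2 : r^2 = C^2 - D^2) (x : ℝ) :
    HasDerivAt (fun y => B / D * y +
        (A * D - B * C) / (D * r) * (y + 2 * Real.arctan (D * Real.sin y / (C + r - D * Real.cos y))))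
      ((A - B * Real.cos x) / (C - D * Real.cos x)) x := by
  have hM : 0 < C - D * Real.cos x := by nlinarith [Real.cos_le_one x, Real.neg_one_le_cos x]
  have h := ((hasDerivAt_id x).const_mul (B / D)).add
    ((poisson_hasDerivAt C D r hD hDC hr hr2 x).const_mul ((A * D - B * C) / (D * r)))
  refine h.congr_deriv (Eq.symm ?_)
  rw [div_eq_iff hM.ne', add_mul, mul_assoc ((A * D - B * C) / (D * r)), div_mul_cancel₀ _ hM.ne']
  field_simp [hM.ne', hD.ne', hr.ne']
  ring

lemma integral_eval (A B C D r : ℝ) (hD : 0 < D) (hDC : D < C)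
    (hr : 0 < r) (hr2 : r^2 = C^2 - D^2) :
    (∫ φ in (0:ℝ)..(2 * Real.pi), (A - B * Real.cos φ) / (C - D * Real.cos φ))
      = 2 * Real.pi * (B / D + (A * D - B * C) / (D * r)) := by
  have hM : ∀ x : ℝ, 0 < C - D * Real.cos x := fun x => by
    nlinarith [Real.cos_le_one x, Real.neg_one_le_cos x]
  have hcont : Continuous (fun φ : ℝ => (A - B * Real.cos φ) / (C - D * Real.cos φ)) := by
    apply Continuous.div
    · fun_prop
    · fun_prop
    · exact fun x => (hM x).ne'
  rw [intervalIntegral.integral_eq_sub_of_hasDerivAt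
    (fun x _ => full_hasDerivAt A B C D r hD hDC hr hr2 x) (hcont.intervalIntegrable _ _)]
  simp [Real.sin_two_pi, Real.cos_two_pi]
  ring

theorem ring_force_integral (θ ϑ : ℝ) (hθ : θ ∈ Set.Ioo 0 Real.pi)
    (hϑ : ϑ ∈ Set.Ioo 0 Real.pi) (hne : θ ≠ ϑ) :
    -(∫ φ in (0 : ℝ)..(2 * Real.pi),
        deriv (fun x => Real.log
          (1 - (Real.cos x * Real.cos ϑ + Real.sin x * Real.sin ϑ * Real.cos φ))) θ)
      = if θ < ϑ then 2 * Real.pi * Real.sin θ / (1 + Real.cos θ)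
        else -(2 * Real.pi * Real.sin θ / (1 - Real.cos θ)) := by
  obtain ⟨hθ1, hθ2⟩ := hθ
  obtain ⟨hϑ1, hϑ2⟩ := hϑ
  have hsθ : 0 < Real.sin θ := Real.sin_pos_of_pos_of_lt_pi hθ1 hθ2
  have hsϑ : 0 < Real.sin ϑ := Real.sin_pos_of_pos_of_lt_pi hϑ1 hϑ2
  have hpyθ := Real.sin_sq_add_cos_sq θ
  have hpyϑ := Real.sin_sq_add_cos_sq ϑ
  have hab : Real.cos θ ≠ Real.cos ϑ :=
    fun h => hne (Real.injOn_cos ⟨hθ1.le, hθ2.le⟩ ⟨hϑ1.le, hϑ2.le⟩ h)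
  have hD : 0 < Real.sin θ * Real.sin ϑ := mul_pos hsθ hsϑ
  have hr : 0 < |Real.cos θ - Real.cos ϑ| := abs_pos.mpr (sub_ne_zero.mpr hab)
  have hr2 : |Real.cos θ - Real.cos ϑ| ^ 2
      = (1 - Real.cos θ * Real.cos ϑ) ^ 2 - (Real.sin θ * Real.sin ϑ) ^ 2 := by
    rw [sq_abs]
    linear_combination Real.sin ϑ ^ 2 * hpyθ + (1 - Real.cos θ ^ 2) * hpyϑ
  have hCD0 : 0 ≤ (1 - Real.cos θ * Real.cos ϑ) + Real.sin θ * Real.sin ϑ := by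
    have h := Real.cos_le_one (θ + ϑ)
    rw [Real.cos_add] at h
    linarith
  have hposq : 0 < (Real.cos θ - Real.cos ϑ) ^ 2 := by
    have h0 := sub_ne_zero.mpr hab
    positivity
  have hDC : Real.sin θ * Real.sin ϑ < 1 - Real.cos θ * Real.cos ϑ := by
    nlinarith [sq_abs (Real.cos θ - Real.cos ϑ)]
  have hM : ∀ x : ℝ, 0 < (1 - Real.cos θ * Real.cos ϑ) - Real.sin θ * Real.sin ϑ * Real.cos x :=
    fun x => by nlinarith [Real.cos_le_one x, Real.neg_one_le_cos x]
  have hd : ∀ φ : ℝ, HasDerivAt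
      (fun x => Real.log (1 - (Real.cos x * Real.cos ϑ + Real.sin x * Real.sin ϑ * Real.cos φ)))
      ((Real.sin θ * Real.cos ϑ - Real.cos θ * Real.sin ϑ * Real.cos φ) /
        ((1 - Real.cos θ * Real.cos ϑ) - Real.sin θ * Real.sin ϑ * Real.cos φ)) θ := by
    intro φ
    have h1 : HasDerivAt (fun x : ℝ => Real.cos x * Real.cos ϑ + Real.sin x * Real.sin ϑ * Real.cos φ)
        (-Real.sin θ * Real.cos ϑ + Real.cos θ * Real.sin ϑ * Real.cos φ) θ :=
      ((Real.hasDerivAt_cos θ).mul_const (Real.cos ϑ)).add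
        (((Real.hasDerivAt_sin θ).mul_const (Real.sin ϑ)).mul_const (Real.cos φ))
    have hinner : HasDerivAt
        (fun x => 1 - (Real.cos x * Real.cos ϑ + Real.sin x * Real.sin ϑ * Real.cos φ))
        (Real.sin θ * Real.cos ϑ - Real.cos θ * Real.sin ϑ * Real.cos φ) θ := by
      have h2 := h1.const_sub 1
      refine h2.congr_deriv ?_
      ring
    have hne0 : (1 - (Real.cos θ * Real.cos ϑ + Real.sin θ * Real.sin ϑ * Real.cos φ)) ≠ 0 := by
      have := hM φ
      intro h
      nlinarith [this]
    have h3 := hinner.log hne0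
    convert h3 using 2
    ring
  have hrw : (∫ φ in (0:ℝ)..(2*Real.pi), deriv (fun x => Real.log
          (1 - (Real.cos x * Real.cos ϑ + Real.sin x * Real.sin ϑ * Real.cos φ))) θ)
      = ∫ φ in (0:ℝ)..(2*Real.pi),
          (Real.sin θ * Real.cos ϑ - Real.cos θ * Real.sin ϑ * Real.cos φ) /
            ((1 - Real.cos θ * Real.cos ϑ) - Real.sin θ * Real.sin ϑ * Real.cos φ) :=
    intervalIntegral.integral_congr (fun φ _ => (hd φ).deriv)
  rw [hrw, integral_eval (Real.sin θ * Real.cos ϑ) (Real.cos θ * Real.sin ϑ)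
    (1 - Real.cos θ * Real.cos ϑ) (Real.sin θ * Real.sin ϑ) (|Real.cos θ - Real.cos ϑ|)
    hD hDC hr hr2]
  have hc1θ : Real.cos θ < 1 := by nlinarith
  have hc2θ : -1 < Real.cos θ := by nlinarith
  rcases lt_or_gt_of_ne hne with h | h
  · rw [if_pos h]
    have hba : Real.cos ϑ < Real.cos θ :=
      Real.strictAntiOn_cos ⟨hθ1.le, hθ2.le⟩ ⟨hϑ1.le, hϑ2.le⟩ h
    rw [abs_of_pos (by linarith : (0:ℝ) < Real.cos θ - Real.cos ϑ)]
    have h1a : (1 : ℝ) + Real.cos θ ≠ 0 := by linarith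
    have hd1 : Real.cos θ - Real.cos ϑ ≠ 0 := by linarith
    field_simp
    ring_nf
    linear_combination (-(Real.cos θ*(1+Real.cos ϑ))) * hpyθ
  · rw [if_neg (not_lt.mpr h.le)]
    have hba : Real.cos θ < Real.cos ϑ :=
      Real.strictAntiOn_cos ⟨hϑ1.le, hϑ2.le⟩ ⟨hθ1.le, hθ2.le⟩ h
    rw [abs_of_neg (by linarith : Real.cos θ - Real.cos ϑ < 0)]
    have h1a : (1 : ℝ) - Real.cos θ ≠ 0 := by linarith
    have hd1 : Real.cos ϑ - Real.cos θ ≠ 0 := by linarith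
    field_simp
    ring_nf
    linear_combination (Real.cos θ*(1-Real.cos ϑ)) * hpyθ
end
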